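/- arXiv:1801.00179 — 2 statements merged into one kernel-verified Lean document; each statement's English description precedes it below -/
import Mathlib

section
/- Let X be a topological space and n ∈ ℕ. If there exists a subset A ⊆ X with |A| ≤ n such that X ∖ A has at least n+2 connected components, then X is not (n+2)-arc connected. -/
open Topology

noncomputable section

variable {V : Type*}

open Classical in
/-- The Dirac function marking a vertex: the point of `|G|` corresponding to vertex `v`. -/
noncomputable def vertexPoint (v : V) : V → ℝ := fun u => if u = v then 1 else 0

open Classical in
/-- The point of `|G|` lying on the edge `vw` at parameter `t` (measured from `v` towards `w`). -/
noncomputable def edgePoint (v w : V) (t : ℝ) : V → ℝ :=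
  fun u => (if u = v then 1 - t else 0) + (if u = w then t else 0)

/-- The geometric realization `|G|` of a simple graph `G`, realized as the set of
formal convex combinations of adjacent pairs of vertices; each closed edge carries
its usual topology as a copy of `[0,1]`. -/
def GraphRealization (G : SimpleGraph V) : Set (V → ℝ) :=
  {x | (∃ v, x = vertexPoint v) ∨
    ∃ v w t, G.Adj v w ∧ t ∈ Set.Icc (0 : ℝ) 1 ∧ x = edgePoint v w t}

/-- A subset of a topological space is an arc if it is homeomorphic to `[0,1]`. -/
def IsArc {X : Type*} [TopologicalSpace X] (A : Set X) : Prop :=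
  Nonempty (↥A ≃ₜ ↥unitInterval)

/-- A space is `n`-arc connected if any at most `n` points lie on a common arc. -/
def NArcConn (X : Type*) [TopologicalSpace X] (n : ℕ) : Prop :=
  ∀ S : Finset X, S.card ≤ n → ∃ A : Set X, IsArc A ∧ ↑S ⊆ A

/-- The unit circle in the plane. -/
def unitCircleSet : Set (ℝ × ℝ) := {p | p.1 ^ 2 + p.2 ^ 2 = 1}

/-- A subset of a topological space is a simple closed curve if homeomorphic to the circle. -/
def IsSimpleClosedCurve {X : Type*} [TopologicalSpace X] (C : Set X) : Prop :=
  Nonempty (↥C ≃ₜ ↥unitCircleSet)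

/-- A space is `n`-circle connected if any at most `n` points lie on a common
simple closed curve. -/
def NCircleConn (X : Type*) [TopologicalSpace X] (n : ℕ) : Prop :=
  ∀ S : Finset X, S.card ≤ n → ∃ C : Set X, IsSimpleClosedCurve C ∧ ↑S ⊆ C

/-- A space is `n`-strongly arc connected if any list of at most `n` points is contained
in an arc, the points appearing along the arc in the listed order. -/
def NStrongArcConn (X : Type*) [TopologicalSpace X] (n : ℕ) : Prop :=
  ∀ l : List X, l.length ≤ n →
    ∃ f : ↥unitInterval → X, Topology.IsEmbedding f ∧
      ∃ t : Fin l.length → ↥unitInterval, Monotone t ∧ ∀ i, f (t i) = l.get i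

/-- A graph is `k`-connected if removing fewer than `k` vertices leaves it connected. -/
def KConnected (G : SimpleGraph V) (k : ℕ) : Prop :=
  ∀ S : Set V, S.encard < (k : ℕ∞) → (G.induce (Sᶜ : Set V)).Connected

/-- A graph is cyclically connected if any two vertices lie on a common cycle. -/
def CyclicallyConnected (G : SimpleGraph V) : Prop :=
  ∀ v w : V, ∃ (u : V) (c : G.Walk u u), c.IsCycle ∧ v ∈ c.support ∧ w ∈ c.support

/-- The circle of radius `r` centered at `c` in the plane. -/
def circleAt (c : ℝ × ℝ) (r : ℝ) : Set (ℝ × ℝ) :=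
  {p | (p.1 - c.1) ^ 2 + (p.2 - c.2) ^ 2 = r ^ 2}

/-- The horizontal segment at height `y` from abscissa `a` to `b`. -/
def hSeg (y a b : ℝ) : Set (ℝ × ℝ) := {p | p.2 = y ∧ a ≤ p.1 ∧ p.1 ≤ b}

/-- The θ-curve: unit circle together with horizontal diameter. -/
def thetaSet : Set (ℝ × ℝ) := circleAt (0, 0) 1 ∪ hSeg 0 (-1) 1

/-- Figure-eight: two unit circles meeting at the origin. -/
def figureEightSet : Set (ℝ × ℝ) := circleAt (-1, 0) 1 ∪ circleAt (1, 0) 1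

/-- Lollipop: unit circle with the segment from `(1,0)` to `(2,0)` attached. -/
def lollipopSet : Set (ℝ × ℝ) := circleAt (0, 0) 1 ∪ hSeg 0 1 2

/-- Lollipop with its free endpoint removed. -/
def openLollipopSet : Set (ℝ × ℝ) := lollipopSet \ {(2, 0)}

/-- Dumbbell: two disjoint unit circles joined by a segment. -/
def dumbbellSet : Set (ℝ × ℝ) := circleAt (-2, 0) 1 ∪ circleAt (2, 0) 1 ∪ hSeg 0 (-1) 1

/-- Happy-face curve: two circles meeting at a point, joined by a further arc. -/
def happyFaceSet : Set (ℝ × ℝ) :=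
  circleAt (-1, 0) 1 ∪ circleAt (1, 0) 1 ∪ {p | p.1 ^ 2 + p.2 ^ 2 = 4 ∧ p.2 ≤ 0}

/-- Baguette curve: two disjoint circles joined by two disjoint arcs. -/
def baguetteSet : Set (ℝ × ℝ) :=
  circleAt (-3, 0) 1 ∪ circleAt (3, 0) 1 ∪ hSeg 0 (-2) 2 ∪ hSeg 1 (-3) 3

/-- A graph is a basic 4-ac graph iff its realization is homeomorphic to a circle,
a θ-curve, a happy-face curve or a baguette curve (this captures precisely the
subdivisions of those four graphs). -/
def IsBasicFourAC {W : Type*} (H : SimpleGraph W) : Prop :=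
  Nonempty (↥(GraphRealization H) ≃ₜ ↥unitCircleSet) ∨
  Nonempty (↥(GraphRealization H) ≃ₜ ↥thetaSet) ∨
  Nonempty (↥(GraphRealization H) ≃ₜ ↥happyFaceSet) ∨
  Nonempty (↥(GraphRealization H) ≃ₜ ↥baguetteSet)

/-- A chain-graph decomposition of the connected graph `G`: links indexed by an
interval `J` of `ℤ`, non-consecutive links are disjoint, consecutive links share
exactly one vertex. -/
structure IsChainGraph (G : SimpleGraph V) (J : Set ℤ) (L : ℤ → G.Subgraph) : Prop where
  connected : G.Connected
  ordConnected : J.OrdConnected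
  nonempty : J.Nonempty
  cover : (⨆ i ∈ J, L i) = (⊤ : G.Subgraph)
  sep : ∀ i ∈ J, ∀ j ∈ J, i + 1 < j → (L i).verts ∩ (L j).verts = ∅
  link : ∀ i ∈ J, i + 1 ∈ J → ∃ v, (L i).verts ∩ (L (i + 1)).verts = {v}

/-- A cut-vertex: a vertex whose removal disconnects the graph. -/
def IsCutVertex (G : SimpleGraph V) (v : V) : Prop :=
  ¬ (G.induce ({v}ᶜ : Set V)).Connected

/-- A block: a maximal 2-connected subgraph. -/
def IsBlock (G : SimpleGraph V) (H : G.Subgraph) : Prop :=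
  KConnected H.coe 2 ∧ ∀ H' : G.Subgraph, H ≤ H' → KConnected H'.coe 2 → H' = H

/-- The block graph of `G`: the bipartite graph on cut-vertices and blocks, a cut-vertex
being adjacent to the blocks containing it. -/
def BlockGraph (G : SimpleGraph V) :
    SimpleGraph ({v : V // IsCutVertex G v} ⊕ {H : G.Subgraph // IsBlock G H}) :=
  SimpleGraph.fromRel fun a b =>
    ∃ (c : {v : V // IsCutVertex G v}) (B : {H : G.Subgraph // IsBlock G H}),
      a = Sum.inl c ∧ b = Sum.inr B ∧ (c : V) ∈ (B : G.Subgraph).verts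

/-- An `A`–`B` path: a path starting in `A`, ending in `B` and meeting `A ∪ B` only
in these two endvertices. -/
structure ABPath (G : SimpleGraph V) (A B : Set V) where
  first : V
  last : V
  walk : G.Walk first last
  isPath : walk.IsPath
  firstA : first ∈ A
  lastB : last ∈ B
  meetA : ∀ v ∈ walk.support, v ∈ A → v = first
  meetB : ∀ v ∈ walk.support, v ∈ B → v = last

/-- A family of pairwise vertex-disjoint paths. -/
def PathFamilyDisjoint {G : SimpleGraph V} {A B : Set V} {k : ℕ}
    (P : Fin k → ABPath G A B) : Prop :=
  ∀ i j, i ≠ j → ∀ v, v ∈ (P i).walk.support → v ∉ (P j).walk.support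

/-- The set of vertices used by a family of paths. -/
def familySupport {G : SimpleGraph V} {A B : Set V} {k : ℕ}
    (P : Fin k → ABPath G A B) : Set V :=
  {v | ∃ i, v ∈ (P i).walk.support}

/-- The set of edges used by a family of paths. -/
def familyEdges {G : SimpleGraph V} {A B : Set V} {k : ℕ}
    (P : Fin k → ABPath G A B) : Set (Sym2 V) :=
  {e | ∃ i, e ∈ (P i).walk.edges}

/-- A walk `W` (with no repeated edges) is alternating with respect to the disjoint
path family `P`: it starts in `A` off the paths; repeated vertices lie on paths of the
family; upon hitting a path by a new edge it follows that path backwards for at least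
one edge; and it traverses edges of paths of the family only backwards. -/
structure IsAlternatingWalk {G : SimpleGraph V} {A B : Set V} {k : ℕ}
    (P : Fin k → ABPath G A B) {x y : V} (W : G.Walk x y) : Prop where
  trail : W.IsTrail
  startA : x ∈ A
  startOff : x ∉ familySupport P
  repeats : ∀ v, List.Duplicate v W.support → v ∈ familySupport P
  follows : ∀ (i : ℕ) (hi : i < W.darts.length) (j : Fin k),
      (W.darts.get ⟨i, hi⟩).snd ∈ (P j).walk.support →
      (W.darts.get ⟨i, hi⟩).edge ∉ (P j).walk.edges →
      ∃ h : i + 1 < W.darts.length, (W.darts.get ⟨i + 1, h⟩).symm ∈ (P j).walk.darts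
  backward : ∀ d ∈ W.darts, ∀ j : Fin k,
      d.edge ∈ (P j).walk.edges → d.symm ∈ (P j).walk.darts

end

/-! If an arc `L` passes through points `x₀, …, x_{n+1}` of pairwise distinct components
of `X \ A`, parametrize it by an embedding `φ : [0,1] → X`. The at most `n` parameters in
`φ⁻¹' A` cut `[0,1]` into at most `n + 1` intervals, so by pigeonhole two of the parameters
`s i < s j` of the points lie in the same one; then `φ '' [s i, s j]` is a connected subset of
`X \ A` joining `x i` to `x j`, a contradiction. -/

open Set Function

theorem IsArc.exists_continuous_injective {X : Type*} [TopologicalSpace X] {L : Set X}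
    (hL : IsArc L) :
    ∃ φ : unitInterval → X, Continuous φ ∧ Injective φ ∧ range φ = L := by
  obtain ⟨e⟩ := hL
  refine ⟨Subtype.val ∘ e.symm, continuous_subtype_val.comp e.symm.continuous,
    Subtype.val_injective.comp e.symm.injective, ?_⟩
  rw [range_comp, e.symm.range_coe, image_univ, Subtype.range_coe]

theorem ncard_inter_Iio_lt_of_mem {α : Type*} [LinearOrder α] {B : Set α} (hB : B.Finite)
    {a b c : α} (hb : b ∈ B) (hab : a ≤ b) (hbc : b < c) :
    (B ∩ Iio a).ncard < (B ∩ Iio c).ncard := by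
  refine ncard_lt_ncard ⟨?_, fun h => (h ⟨hb, hbc⟩).2.not_ge hab⟩ (hB.subset inter_subset_left)
  exact inter_subset_inter_right B (Iio_subset_Iio (hab.trans_lt hbc).le)

theorem exists_lt_disjoint_Icc_of_ncard_add_one_lt {α ι : Type*} [LinearOrder α] [Fintype ι]
    {B : Set α} (hB : B.Finite) (hcard : B.ncard + 1 < Fintype.card ι) {s : ι → α}
    (hs : Injective s) (hsB : ∀ i, s i ∉ B) :
    ∃ i j, s i < s j ∧ Disjoint (Icc (s i) (s j)) B := by
  let gap : ι → Fin (B.ncard + 1) := fun i =>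
    ⟨(B ∩ Iio (s i)).ncard, Nat.lt_succ_of_le (ncard_le_ncard inter_subset_left hB)⟩
  have disjoint_of_gap_eq : ∀ i j, s i < s j → gap i = gap j → Disjoint (Icc (s i) (s j)) B := by
    refine fun i j _ hgap => disjoint_left.mpr fun b hb hbB => ?_
    have hlt := ncard_inter_Iio_lt_of_mem hB hbB hb.1
      (hb.2.lt_of_ne fun h => hsB j (h ▸ hbB))
    exact hlt.ne (Fin.ext_iff.mp hgap)
  obtain ⟨i, j, hij, hgap⟩ := Fintype.exists_ne_map_eq_of_card_lt gap (by simpa using hcard)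
  rcases (hs.ne hij).lt_or_gt with h | h
  · exact ⟨i, j, h, disjoint_of_gap_eq i j h hgap⟩
  · exact ⟨j, i, h, disjoint_of_gap_eq j i h hgap.symm⟩

theorem ConnectedComponents.coe_eq_of_isPreconnected_mapsTo {α X : Type*} [TopologicalSpace α]
    [TopologicalSpace X] {γ : α → X} (hγ : Continuous γ) {S : Set α} (hS : IsPreconnected S)
    {U : Set X} (hSU : MapsTo γ S U) {a b : α} (ha : a ∈ S) (hb : b ∈ S) {x y : U}
    (hx : γ a = x) (hy : γ b = y) :
    (x : ConnectedComponents U) = y := by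
  have := isPreconnected_iff_preconnectedSpace.mp hS
  have hrange := isPreconnected_range (hγ.restrict hSU)
  have hxy : x = hSU.restrict γ S U ⟨a, ha⟩ := Subtype.ext hx.symm
  have hyy : y = hSU.restrict γ S U ⟨b, hb⟩ := Subtype.ext hy.symm
  rw [ConnectedComponents.coe_eq_coe']
  exact hrange.subset_connectedComponent ⟨_, hyy.symm⟩ ⟨_, hxy.symm⟩

/-- If some set `A` of at most `n` points of a topological space `X` is such
that `X \ A` has at least `n+2` connected components, then `X` is not `(n+2)`-arc
connected. -/
theorem statement0 {X : Type*} [TopologicalSpace X] (n : ℕ) (A : Set X)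
    (hA : A.encard ≤ (n : ℕ∞))
    (hcomp : ∃ f : Fin (n + 2) → ConnectedComponents ↥(Aᶜ), Function.Injective f) :
    ¬ NArcConn X (n + 2) := by
  classical
  intro hac
  obtain ⟨f, hf⟩ := hcomp
  obtain ⟨hAfin, hAcard⟩ := encard_le_coe_iff_finite_ncard_le.mp hA
  choose x hx using fun i => ConnectedComponents.surjective_coe (f i)
  obtain ⟨L, hL, hxL⟩ := hac (Finset.univ.image fun i => (x i : X))
    (Finset.card_image_le.trans (by simp))
  obtain ⟨φ, hφc, hφi, rfl⟩ := hL.exists_continuous_injective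
  choose s hs using fun i =>
    hxL (Finset.mem_image_of_mem (fun i => (x i : X)) (Finset.mem_univ i))
  have hs_inj : Injective s := fun i j hij =>
    hf (by rw [← hx i, ← hx j, Subtype.ext (((hs i).symm.trans (congrArg φ hij)).trans (hs j))])
  have hB : (φ ⁻¹' A).ncard ≤ A.ncard := by
    rw [← hφi.injOn.ncard_image]
    exact ncard_le_ncard (image_preimage_subset φ A) hAfin
  obtain ⟨i, j, hij, hdisj⟩ := exists_lt_disjoint_Icc_of_ncard_add_one_lt
    (hAfin.preimage hφi.injOn) (by rw [Fintype.card_fin]; omega) hs_inj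
    (fun i h => (x i).2 ((hs i) ▸ h))
  have hfij : f i = f j := by
    rw [← hx i, ← hx j]
    exact ConnectedComponents.coe_eq_of_isPreconnected_mapsTo hφc isPreconnected_Icc
      (U := Aᶜ) (fun t ht htA => disjoint_left.mp hdisj ht htA) (left_mem_Icc.mpr hij.le)
      (right_mem_Icc.mpr hij.le) (hs i) (hs j)
  exact hij.ne (congrArg s (hf hfij))
end

section
/- Let G be a simple graph with at least one edge and let n ∈ ℕ. If no set of n points of |G| cuts |G| into at least n+2 connected components (i.e. for every A ⊆ |G| with |A| = n, the space |G| ∖ A has at most n+1 connected components), then for every 1 ≤ m ≤ n, no set of m points of |G| cuts |G| into at least m+2 connected components. -/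
open Topology

/-!
If `m ≥ 1` points `A` cut `|G|` into at least `m + 2` components, we find `m + 1` points cutting
it into at least `m + 3`; iterating reaches `n` points. Take `a ∈ A`. If `a` lies on an edge, then,
`A` being finite, a segment of that edge starting at `a` is otherwise free of `A`; one new point
`c` inside it turns the open segment from `a` to `c` into a new component. If `a` is an isolated
vertex, `{a}` is clopen, so dropping `a` from `A` merges nothing, and two new points inside any
edge cut off the open segment between them. In both cases the new points lie in one component of
`|G| ∖ A`, so the other components survive, and that one contributes two.
-/

section Components

variable {X ι : Type*} [TopologicalSpace X]

/-- `x` witnesses that `F` has at least `#ι` connected components. -/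
def SeparatedIn (F : Set X) (x : ι → X) : Prop :=
  (∀ i, x i ∈ F) ∧ Pairwise fun i j => x j ∉ connectedComponentIn F (x i)

lemma mk_eq_mk_iff_mem_connectedComponentIn {F : Set X} {p q : X} (hp : p ∈ F) (hq : q ∈ F) :
    ConnectedComponents.mk (⟨p, hp⟩ : F) = ConnectedComponents.mk ⟨q, hq⟩ ↔
      q ∈ connectedComponentIn F p := by
  rw [ConnectedComponents.coe_eq_coe, connectedComponentIn_eq_image hp]
  constructor
  · intro h
    exact ⟨⟨q, hq⟩, h ▸ mem_connectedComponent, rfl⟩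
  · rintro ⟨y, hy, rfl⟩
    exact connectedComponent_eq hy

lemma exists_injective_connectedComponents_iff (F : Set X) :
    (∃ g : ι → ConnectedComponents F, Function.Injective g) ↔ ∃ x : ι → X, SeparatedIn F x := by
  constructor
  · rintro ⟨g, hg⟩
    choose y hy using fun i => ConnectedComponents.surjective_coe (g i)
    refine ⟨fun i => y i, fun i => (y i).2, fun i j hij hji => hij (hg ?_)⟩
    rw [← hy i, ← hy j]
    exact (mk_eq_mk_iff_mem_connectedComponentIn (y i).2 (y j).2).mpr hji
  · rintro ⟨x, hxF, hx⟩
    refine ⟨fun i => ConnectedComponents.mk ⟨x i, hxF i⟩, fun i j hij => ?_⟩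
    by_contra hne
    exact hx hne ((mk_eq_mk_iff_mem_connectedComponentIn _ _).mp hij)

lemma connectedComponentIn_subset_of_isClopen_singleton {a : X} (ha : IsClopen {a}) {A B : Set X}
    (haA : a ∈ A) (hAB : ∀ z ∈ A, z ≠ a → z ∈ B) {p : X} (hpA : p ∈ Aᶜ) (hpB : p ∈ Bᶜ) :
    connectedComponentIn Bᶜ p ⊆ connectedComponentIn Aᶜ p := by
  have hpa : connectedComponentIn Bᶜ p ⊆ {a}ᶜ :=
    (isPreconnected_connectedComponentIn.subset_connectedComponent
      (mem_connectedComponentIn hpB)).trans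
    (ha.compl.connectedComponent_subset fun h => hpA (h ▸ haA))
  exact isPreconnected_connectedComponentIn.subset_connectedComponentIn
    (mem_connectedComponentIn hpB) fun z hz hzA =>
      connectedComponentIn_subset _ _ hz (hAB z hzA (hpa hz))

namespace SeparatedIn

variable {F : Set X}

lemma cons {n : ℕ} {x : Fin n → X} (hx : SeparatedIn F x) {q : X} (hq : q ∈ F)
    (hqx : ∀ i, x i ∉ connectedComponentIn F q) :
    SeparatedIn F (Fin.cons q x : Fin (n + 1) → X) := by
  have hxq : ∀ i, q ∉ connectedComponentIn F (x i) := fun i h =>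
    hqx i (connectedComponentIn_eq h ▸ mem_connectedComponentIn (hx.1 i))
  refine ⟨Fin.cases hq hx.1, fun i j hij => ?_⟩
  cases i using Fin.cases <;> cases j using Fin.cases
  · exact absurd rfl hij
  · exact hqx _
  · exact hxq _
  · exact hx.2 fun h => hij (congrArg Fin.succ h)

/-- At most one `x i` lies in the component of `q`. -/
lemma exists_forall_notMem {n : ℕ} {x : Fin (n + 1) → X} (hx : SeparatedIn F x) (q : X) :
    ∃ y : Fin n → X, SeparatedIn F y ∧ ∀ i, y i ∉ connectedComponentIn F q := by
  by_cases hq : ∃ i₀, x i₀ ∈ connectedComponentIn F q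
  · obtain ⟨i₀, hi₀⟩ := hq
    refine ⟨x ∘ i₀.succAbove, ⟨fun i => hx.1 _, hx.2.comp_of_injective
      Fin.succAbove_right_injective⟩, fun i hi => ?_⟩
    exact hx.2 (Fin.succAbove_ne i₀ i).symm (connectedComponentIn_eq hi₀ ▸ hi)
  · rw [not_exists] at hq
    exact ⟨x ∘ Fin.castSucc, ⟨fun i => hx.1 _, hx.2.comp_of_injective (Fin.castSucc_injective n)⟩,
      fun i => hq _⟩

/-- The components of `F` other than that of `q₀` survive in `F'`, and that one splits in two. -/
lemma exists_succ {n : ℕ} {x : Fin (n + 1) → X} (hx : SeparatedIn F x) {F' : Set X} {q₀ q₁ : X}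
    (hq₁ : q₁ ∈ connectedComponentIn F q₀) (hF' : F \ connectedComponentIn F q₀ ⊆ F')
    (hrefine : ∀ p ∈ F ∩ F', connectedComponentIn F' p ⊆ connectedComponentIn F p)
    (hq₀F' : q₀ ∈ F') (hq₁F' : q₁ ∈ F') (hq₀₁ : q₁ ∉ connectedComponentIn F' q₀) :
    ∃ y : Fin (n + 2) → X, SeparatedIn F' y := by
  obtain ⟨y, hy, hyq⟩ := hx.exists_forall_notMem q₀
  have hq₀F : q₀ ∈ F := connectedComponentIn_nonempty_iff.mp ⟨_, hq₁⟩
  have hq₁F : q₁ ∈ F := connectedComponentIn_subset _ _ hq₁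
  have hyF' : ∀ i, y i ∈ F' := fun i => hF' ⟨hy.1 i, hyq i⟩
  have hy' : SeparatedIn F' y :=
    ⟨hyF', fun i j hij h => hy.2 hij (hrefine _ ⟨hy.1 i, hyF' i⟩ h)⟩
  have hyq₀ : ∀ i, y i ∉ connectedComponentIn F' q₀ := fun i h =>
    hyq i (hrefine _ ⟨hq₀F, hq₀F'⟩ h)
  have hyq₁ : ∀ i, y i ∉ connectedComponentIn F' q₁ := fun i h =>
    hyq i (connectedComponentIn_eq hq₁ ▸ hrefine _ ⟨hq₁F, hq₁F'⟩ h)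
  exact ⟨_, (hy'.cons hq₁F' hyq₁).cons hq₀F' (Fin.cases hq₀₁ hyq₀)⟩

end SeparatedIn

end Components

section Realization

open Set

variable {V : Type*} {G : SimpleGraph V} {v w : V}

lemma edgePoint_apply_left (h : v ≠ w) (t : ℝ) : edgePoint v w t v = 1 - t := by
  simp [edgePoint, h]

lemma edgePoint_apply_right (h : v ≠ w) (t : ℝ) : edgePoint v w t w = t := by
  simp [edgePoint, h.symm]

lemma edgePoint_zero (v w : V) : edgePoint v w 0 = vertexPoint v := by
  funext u; simp [edgePoint, vertexPoint]

lemma edgePoint_one (v w : V) : edgePoint v w 1 = vertexPoint w := by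
  funext u; simp only [edgePoint, vertexPoint]; split_ifs <;> norm_num

lemma add_apply_eq_one_of_pos {z : V → ℝ} (hz : z ∈ GraphRealization G) (hvw : v ≠ w)
    (hv : 0 < z v) (hw : 0 < z w) : z v + z w = 1 := by
  rcases hz with ⟨x, rfl⟩ | ⟨a, b, t, hab, ht, rfl⟩
  · simp only [vertexPoint] at hv hw
    split_ifs at hv hw <;> grind
  · have := hab.ne
    simp only [edgePoint] at hv hw ⊢
    split_ifs at hv hw ⊢ <;> grind

lemma eq_edgePoint_of_add_apply_eq_one {z : V → ℝ} (hz : z ∈ GraphRealization G)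
    (hvw : v ≠ w) (h : z v + z w = 1) : z = edgePoint v w (z w) := by
  rcases hz with ⟨x, rfl⟩ | ⟨a, b, t, hab, ht, rfl⟩
  · funext u
    simp only [vertexPoint, edgePoint] at h ⊢
    split_ifs at h ⊢ <;> grind
  · have := hab.ne
    funext u
    simp only [edgePoint] at h ⊢
    split_ifs at h ⊢ <;> grind

lemma apply_eq_zero_of_isolated {z : V → ℝ} (hz : z ∈ GraphRealization G) {u : V}
    (hu : ∀ y, ¬ G.Adj u y) (hzu : z ≠ vertexPoint u) : z u = 0 := by
  rcases hz with ⟨x, rfl⟩ | ⟨a, b, t, hab, ht, rfl⟩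
  · have : u ≠ x := fun h => hzu (h ▸ rfl)
    simp [vertexPoint, this]
  · have ha : u ≠ a := fun h => hu b (h ▸ hab)
    have hb : u ≠ b := fun h => hu a (h ▸ hab.symm)
    simp [edgePoint, ha, hb]

/-- `edgePoint v w r` as a point of `|G|`, with `r` clamped to `[0, 1]` to make the map total. -/
noncomputable def edgeMap (hvw : G.Adj v w) (r : ℝ) : GraphRealization G :=
  ⟨edgePoint v w (projIcc 0 1 zero_le_one r), Or.inr ⟨v, w, _, hvw, (projIcc 0 1 _ r).2, rfl⟩⟩

lemma coe_edgeMap (hvw : G.Adj v w) {r : ℝ} (hr : r ∈ Icc (0 : ℝ) 1) :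
    (edgeMap hvw r : V → ℝ) = edgePoint v w r := by
  simp [edgeMap, projIcc_of_mem _ hr]

lemma continuous_edgeMap (hvw : G.Adj v w) : Continuous (edgeMap hvw) := by
  refine Continuous.subtype_mk (continuous_pi fun u => ?_) _
  simp only [edgePoint]
  split_ifs <;> fun_prop

lemma edgeMap_injOn (hvw : G.Adj v w) : InjOn (edgeMap hvw) (Icc 0 1) := by
  intro r hr r' hr' h
  have := congrFun (congrArg Subtype.val h) w
  rwa [coe_edgeMap hvw hr, coe_edgeMap hvw hr', edgePoint_apply_right hvw.ne,
    edgePoint_apply_right hvw.ne] at this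

lemma exists_eq_edgeMap_or_isolated (z : GraphRealization G) :
    (∃ v w, ∃ hvw : G.Adj v w, ∃ t ∈ Ico (0 : ℝ) 1, z = edgeMap hvw t) ∨
      ∃ u, (∀ y, ¬ G.Adj u y) ∧ (z : V → ℝ) = vertexPoint u := by
  obtain ⟨z, hz⟩ := z
  rcases hz with ⟨u, rfl⟩ | ⟨a, b, t, hab, ht, rfl⟩
  · by_cases hu : ∃ y, G.Adj u y
    · obtain ⟨y, huy⟩ := hu
      refine .inl ⟨u, y, huy, 0, ⟨le_rfl, one_pos⟩, Subtype.ext ?_⟩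
      rw [coe_edgeMap huy ⟨le_rfl, zero_le_one⟩, edgePoint_zero]
    · exact .inr ⟨u, not_exists.mp hu, rfl⟩
  · rcases ht.2.lt_or_eq with ht1 | rfl
    · exact .inl ⟨a, b, hab, t, ⟨ht.1, ht1⟩, Subtype.ext (coe_edgeMap hab ht).symm⟩
    · refine .inl ⟨b, a, hab.symm, 0, ⟨le_rfl, one_pos⟩, Subtype.ext ?_⟩
      rw [coe_edgeMap hab.symm ⟨le_rfl, zero_le_one⟩, edgePoint_zero]
      exact edgePoint_one a b

lemma exists_edgeMap_Ioo_notMem (hvw : G.Adj v w) {A : Set (GraphRealization G)}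
    (hA : A.Finite) {t : ℝ} (ht0 : 0 ≤ t) (ht1 : t < 1) :
    ∃ s, t < s ∧ s ≤ 1 ∧ ∀ r ∈ Ioo t s, edgeMap hvw r ∉ A := by
  set P := (Icc 0 1 ∩ edgeMap hvw ⁻¹' A) \ {t}
  have hP : P.Finite :=
    (Finite.of_finite_image (hA.subset (image_subset_iff.mpr inter_subset_right))
      ((edgeMap_injOn hvw).mono inter_subset_left)).sdiff
  have hnhds : Iio 1 ∩ Pᶜ ∈ 𝓝[>] t := nhdsWithin_le_nhds <|
    Filter.inter_mem (Iio_mem_nhds ht1) (hP.isClosed.isOpen_compl.mem_nhds fun h => h.2 rfl)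
  obtain ⟨s, hts, hsub⟩ := mem_nhdsGT_iff_exists_Ioo_subset.mp hnhds
  refine ⟨s, hts, le_of_not_gt fun hs => lt_irrefl (1 : ℝ) (hsub ⟨ht1, hs⟩).1, fun r hr hrA => ?_⟩
  exact (hsub hr).2 ⟨⟨⟨ht0.trans hr.1.le, (hsub hr).1.le⟩, hrA⟩, hr.1.ne'⟩

lemma edgeMap_mem_connectedComponentIn (hvw : G.Adj v w) {A : Set (GraphRealization G)}
    {t s : ℝ} (hfree : ∀ r ∈ Ioo t s, edgeMap hvw r ∉ A) {r₁ r₂ : ℝ}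
    (hr₁ : r₁ ∈ Ioo t s) (hr₂ : r₂ ∈ Ioo t s) :
    edgeMap hvw r₂ ∈ connectedComponentIn Aᶜ (edgeMap hvw r₁) :=
  (isPreconnected_Ioo.image _ (continuous_edgeMap hvw).continuousOn).subset_connectedComponentIn
    (mem_image_of_mem _ hr₁) (by rintro _ ⟨r, hr, rfl⟩; exact hfree r hr) (mem_image_of_mem _ hr₂)

lemma continuous_apply_coe (u : V) :
    Continuous fun z : GraphRealization G => (z : V → ℝ) u :=
  (continuous_apply u).comp continuous_subtype_val

lemma eq_edgeMap_of_add_apply_eq_one (hvw : G.Adj v w) {z : GraphRealization G}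
    (h : (z : V → ℝ) v + (z : V → ℝ) w = 1) (hz : (z : V → ℝ) w ∈ Icc (0 : ℝ) 1) :
    z = edgeMap hvw ((z : V → ℝ) w) :=
  Subtype.ext ((eq_edgePoint_of_add_apply_eq_one z.2 hvw.ne h).trans (coe_edgeMap hvw hz).symm)

lemma edgeMap_notMem_connectedComponentIn (hvw : G.Adj v w) {B : Set (GraphRealization G)}
    {α β r₁ r₂ : ℝ} (hα : 0 ≤ α) (hαr₁ : α < r₁) (hr₁β : r₁ < β) (hβr₂ : β < r₂) (hr₂ : r₂ ≤ 1)
    (hαB : edgeMap hvw α ∈ B) (hβB : edgeMap hvw β ∈ B) :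
    edgeMap hvw r₂ ∉ connectedComponentIn Bᶜ (edgeMap hvw r₁) := by
  intro h
  have hne := hvw.ne
  have hcv := continuous_apply_coe (G := G) v
  have hcw := continuous_apply_coe (G := G) w
  -- `U` is the open segment `(α, β)` of the edge; off `B`, `W` covers the rest of `|G|`.
  set U := {z : GraphRealization G | 1 - β < (z : V → ℝ) v ∧ α < (z : V → ℝ) w}
  set W := {z : GraphRealization G |
    (z : V → ℝ) w < α ∨ β < (z : V → ℝ) w ∨ (z : V → ℝ) v + (z : V → ℝ) w ≠ 1}
  have hU : IsOpen U := (isOpen_lt continuous_const hcv).inter (isOpen_lt continuous_const hcw)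
  have hW : IsOpen W := (isOpen_lt hcw continuous_const).union
    ((isOpen_lt continuous_const hcw).union (isOpen_ne_fun (hcv.add hcw) continuous_const))
  have hUW : Disjoint U W := by
    refine disjoint_left.mpr fun z ⟨hzv, hzw⟩ hzW => ?_
    have hsum := add_apply_eq_one_of_pos z.2 hne (by linarith) (by linarith)
    rcases hzW with h | h | h <;> first | exact h hsum | linarith
  have hcover : Bᶜ ⊆ U ∪ W := by
    intro z hzB
    by_contra hzUW
    simp only [U, W, mem_union, mem_ofPred_eq, not_or, not_and_or, not_lt, not_not] at hzUW
    obtain ⟨hzU, hzα, hzβ, hsum⟩ := hzUW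
    have hz := eq_edgeMap_of_add_apply_eq_one hvw hsum ⟨hα.trans hzα, by linarith⟩
    have hα' : α < (z : V → ℝ) w := hzα.lt_of_ne fun h' => hzB (by rwa [hz, ← h'])
    have hβ' : (z : V → ℝ) w < β := hzβ.lt_of_ne fun h' => hzB (by rwa [hz, h'])
    rcases hzU with h' | h' <;> linarith
  have hr₁B : edgeMap hvw r₁ ∈ Bᶜ := connectedComponentIn_nonempty_iff.mp ⟨_, h⟩
  have hsub := isPreconnected_connectedComponentIn.subset_left_of_subset_union hU hW hUW
    ((connectedComponentIn_subset _ _).trans hcover)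
    ⟨_, mem_connectedComponentIn hr₁B, by
      simp only [U, mem_ofPred_eq, coe_edgeMap hvw (r := r₁) ⟨by linarith, by linarith⟩,
        edgePoint_apply_left hne, edgePoint_apply_right hne]
      constructor <;> linarith⟩
  have := (hsub h).1
  rw [coe_edgeMap hvw ⟨by linarith, hr₂⟩, edgePoint_apply_left hne] at this
  linarith

lemma isClopen_singleton_of_isolated {u : V} (hu : ∀ y, ¬ G.Adj u y) {a : GraphRealization G}
    (ha : (a : V → ℝ) = vertexPoint u) : IsClopen {a} := by
  have hcu := continuous_apply_coe (G := G) u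
  have hval : ∀ z, z ≠ a → (z : V → ℝ) u = 0 := fun z hz =>
    apply_eq_zero_of_isolated z.2 hu fun h => hz (Subtype.ext (h.trans ha.symm))
  have hau : (a : V → ℝ) u = 1 := by simp [ha, vertexPoint]
  have hopen : {a} = {z : GraphRealization G | 1 / 2 < (z : V → ℝ) u} := by
    ext z
    by_cases hz : z = a
    · norm_num [hz, hau]
    · simp [hz, hval z hz]
  have hclosed : {a} = {z : GraphRealization G | 1 / 2 ≤ (z : V → ℝ) u} := by
    ext z
    by_cases hz : z = a
    · norm_num [hz, hau]
    · simp [hz, hval z hz]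
  exact ⟨hclosed ▸ isClosed_le continuous_const hcu, hopen ▸ isOpen_lt continuous_const hcu⟩

lemma exists_separatedIn_insert_edgeMap {A : Set (GraphRealization G)} {n : ℕ}
    (hvw : G.Adj v w) {t : ℝ} (ht0 : 0 ≤ t) (ht1 : t < 1) (hA : A.Finite)
    (htA : edgeMap hvw t ∈ A) {x : Fin (n + 1) → GraphRealization G}
    (hx : SeparatedIn Aᶜ x) :
    ∃ B : Set (GraphRealization G), B.encard = A.encard + 1 ∧
      ∃ y : Fin (n + 2) → GraphRealization G, SeparatedIn Bᶜ y := by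
  obtain ⟨s, hts, hs1, hfree⟩ := exists_edgeMap_Ioo_notMem hvw hA ht0 ht1
  obtain ⟨r, htr, hrs⟩ := exists_between hts
  obtain ⟨r₀, htr₀, hr₀r⟩ := exists_between htr
  obtain ⟨r₁, hrr₁, hr₁s⟩ := exists_between hrs
  have hmem : ∀ {r'}, r' ∈ Ioo t s → r' ∈ Icc (0 : ℝ) 1 :=
    fun h => ⟨ht0.trans h.1.le, h.2.le.trans hs1⟩
  have hr : r ∈ Ioo t s := ⟨htr, hrs⟩
  have hr₀ : r₀ ∈ Ioo t s := ⟨htr₀, hr₀r.trans hrs⟩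
  have hr₁ : r₁ ∈ Ioo t s := ⟨htr.trans hrr₁, hr₁s⟩
  have hne : ∀ {r'}, r' ∈ Ioo t s → r' ≠ r → edgeMap hvw r' ∉ insert (edgeMap hvw r) A :=
    fun h hr' => not_or.mpr ⟨((edgeMap_injOn hvw).ne_iff (hmem h) (hmem hr)).mpr hr', hfree _ h⟩
  refine ⟨insert (edgeMap hvw r) A, encard_insert_of_notMem (hfree r hr), ?_⟩
  refine hx.exists_succ (edgeMap_mem_connectedComponentIn hvw hfree hr₀ hr₁) ?_
    (fun p _ => connectedComponentIn_mono p (compl_subset_compl.mpr (subset_insert _ _)))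
    (hne hr₀ hr₀r.ne) (hne hr₁ hrr₁.ne')
    (edgeMap_notMem_connectedComponentIn hvw ht0 htr₀ hr₀r hrr₁ (hmem hr₁).2
      (mem_insert_of_mem _ htA) (mem_insert _ _))
  rintro z ⟨hzA, hz⟩ (rfl | hz')
  · exact hz (edgeMap_mem_connectedComponentIn hvw hfree hr₀ hr)
  · exact hzA hz'

lemma exists_separatedIn_of_isolated {A : Set (GraphRealization G)} {n : ℕ}
    (hvw : G.Adj v w) {u : V} (hu : ∀ y, ¬ G.Adj u y) {a : GraphRealization G}
    (ha : (a : V → ℝ) = vertexPoint u) (haA : a ∈ A) (hA : A.Finite)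
    {x : Fin (n + 1) → GraphRealization G} (hx : SeparatedIn Aᶜ x) :
    ∃ B : Set (GraphRealization G), B.encard = A.encard + 1 ∧
      ∃ y : Fin (n + 2) → GraphRealization G, SeparatedIn Bᶜ y := by
  obtain ⟨s, hs0, hs1, hfree⟩ := exists_edgeMap_Ioo_notMem hvw hA le_rfl zero_lt_one
  obtain ⟨c₁, hc₁0, hc₁s⟩ := exists_between hs0
  obtain ⟨r₁, hr₁c₁, hr₁s⟩ := exists_between hc₁s
  obtain ⟨c₀, hc₀0, hc₀c₁⟩ := exists_between hc₁0
  obtain ⟨r₀, hc₀r₀, hr₀c₁⟩ := exists_between hc₀c₁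
  have hmem : ∀ {r}, r ∈ Ioo 0 s → r ∈ Icc (0 : ℝ) 1 := fun h => ⟨h.1.le, h.2.le.trans hs1⟩
  have hc₀ : c₀ ∈ Ioo 0 s := ⟨hc₀0, hc₀c₁.trans hc₁s⟩
  have hc₁ : c₁ ∈ Ioo 0 s := ⟨hc₁0, hc₁s⟩
  have hr₀ : r₀ ∈ Ioo 0 s := ⟨hc₀0.trans hc₀r₀, hr₀c₁.trans hc₁s⟩
  have hr₁ : r₁ ∈ Ioo 0 s := ⟨hc₁0.trans hr₁c₁, hr₁s⟩
  set B := insert (edgeMap hvw c₀) (insert (edgeMap hvw c₁) (A \ {a}))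
  have hne : ∀ {r r'}, r ∈ Ioo 0 s → r' ∈ Ioo 0 s → r ≠ r' → edgeMap hvw r ≠ edgeMap hvw r' :=
    fun h h' => ((edgeMap_injOn hvw).ne_iff (hmem h) (hmem h')).mpr
  have hnotB : ∀ {r}, r ∈ Ioo 0 s → r ≠ c₀ → r ≠ c₁ → edgeMap hvw r ∉ B := fun h h₀ h₁ =>
    not_or.mpr ⟨hne h hc₀ h₀, not_or.mpr ⟨hne h hc₁ h₁, fun h' => hfree _ h h'.1⟩⟩
  have hB : B.encard = A.encard + 1 := by
    rw [encard_insert_of_notMem, encard_insert_of_notMem, ← encard_sdiff_singleton_add_one haA,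
      add_assoc, one_add_one_eq_two]
    · exact fun h => hfree _ hc₁ h.1
    · exact not_or.mpr ⟨hne hc₀ hc₁ hc₀c₁.ne, fun h => hfree _ hc₀ h.1⟩
  refine ⟨B, hB, hx.exists_succ (edgeMap_mem_connectedComponentIn hvw hfree hr₀ hr₁) ?_ ?_
    (hnotB hr₀ hc₀r₀.ne' hr₀c₁.ne) (hnotB hr₁ (hc₀c₁.trans hr₁c₁).ne' hr₁c₁.ne')
    (edgeMap_notMem_connectedComponentIn hvw hc₀0.le hc₀r₀ hr₀c₁ hr₁c₁ (hmem hr₁).2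
      (mem_insert _ _) (mem_insert_of_mem _ (mem_insert _ _)))⟩
  · rintro z ⟨hzA, hz⟩ (rfl | rfl | hz')
    · exact hz (edgeMap_mem_connectedComponentIn hvw hfree hr₀ hc₀)
    · exact hz (edgeMap_mem_connectedComponentIn hvw hfree hr₀ hc₁)
    · exact hzA hz'.1
  · refine fun p hp => connectedComponentIn_subset_of_isClopen_singleton
      (isClopen_singleton_of_isolated hu ha) haA (fun z hzA hza => ?_) hp.1 hp.2
    exact mem_insert_of_mem _ (mem_insert_of_mem _ ⟨hzA, hza⟩)

lemma exists_separatedIn_compl_succ (hE : ∃ v w, G.Adj v w) {A : Set (GraphRealization G)}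
    (hA : A.Finite) (hAne : A.Nonempty) {n : ℕ} {x : Fin (n + 1) → GraphRealization G}
    (hx : SeparatedIn Aᶜ x) :
    ∃ B : Set (GraphRealization G), B.encard = A.encard + 1 ∧
      ∃ y : Fin (n + 2) → GraphRealization G, SeparatedIn Bᶜ y := by
  by_cases hedge : ∃ a ∈ A, ∃ v w, ∃ hvw : G.Adj v w, ∃ t ∈ Ico (0 : ℝ) 1, a = edgeMap hvw t
  · obtain ⟨a, haA, v, w, hvw, t, ht, rfl⟩ := hedge
    exact exists_separatedIn_insert_edgeMap hvw ht.1 ht.2 hA haA hx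
  · obtain ⟨a, haA⟩ := hAne
    obtain ⟨v, w, hvw⟩ := hE
    obtain ⟨u, hu, ha⟩ :=
      (exists_eq_edgeMap_or_isolated a).resolve_left fun h => hedge ⟨a, haA, h⟩
    exact exists_separatedIn_of_isolated hvw hu ha haA hA hx

lemma exists_separatedIn_compl_of_le (hE : ∃ v w, G.Adj v w) {m n : ℕ} (hm : 1 ≤ m)
    (hmn : m ≤ n) {A : Set (GraphRealization G)} (hA : A.encard = m)
    {x : Fin (m + 2) → GraphRealization G} (hx : SeparatedIn Aᶜ x) :
    ∃ B : Set (GraphRealization G), B.encard = n ∧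
      ∃ y : Fin (n + 2) → GraphRealization G, SeparatedIn Bᶜ y := by
  induction n, hmn using Nat.le_induction with
  | base => exact ⟨A, hA, x, hx⟩
  | succ n hmn ih =>
    obtain ⟨B, hB, y, hy⟩ := ih
    have hBne : B.Nonempty :=
      nonempty_of_encard_ne_zero (by rw [hB]; exact_mod_cast (show n ≠ 0 by omega))
    obtain ⟨B', hB', hB'y⟩ :=
      exists_separatedIn_compl_succ hE (finite_of_encard_eq_coe hB) hBne hy
    exact ⟨B', by rw [hB', hB]; rfl, hB'y⟩

end Realization

/-- For a graph `G` with at least one edge, if no set of `n` points of `|G|`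
cuts `|G|` into at least `n+2` components, then for every `1 ≤ m ≤ n`, no set of `m`
points of `|G|` cuts `|G|` into at least `m+2` components. -/
theorem statement1 {V : Type*} (G : SimpleGraph V) (hE : ∃ v w, G.Adj v w) (n : ℕ)
    (hn : ∀ A : Set ↥(GraphRealization G), A.encard = (n : ℕ∞) →
      ¬ ∃ f : Fin (n + 2) → ConnectedComponents ↥(Aᶜ), Function.Injective f) :
    ∀ m : ℕ, 1 ≤ m → m ≤ n →
      ∀ A : Set ↥(GraphRealization G), A.encard = (m : ℕ∞) →
        ¬ ∃ f : Fin (m + 2) → ConnectedComponents ↥(Aᶜ), Function.Injective f := by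
  intro m hm hmn A hA hcut
  obtain ⟨x, hx⟩ := (exists_injective_connectedComponents_iff _).mp hcut
  obtain ⟨B, hB, hBcut⟩ := exists_separatedIn_compl_of_le hE hm hmn hA hx
  exact hn B hB ((exists_injective_connectedComponents_iff _).mpr hBcut)
end
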